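/- arXiv:2405.05679 — 4 statements merged into one kernel-verified Lean document; each statement's English description precedes it below -/
import Mathlib

section
/- Suppose Assumptions ALL and AC hold. Set K0 := 2^{1−q} max{L, |∇²h^{(1)}(0)|, …, |∇²h^{(d)}(0)|}, K1 := max{K0, |∇h^{(1)}(0)|, …, |∇h^{(d)}(0)|}, R_OS := (b/a)^{1/(r−r̄)}, and L_OS := √d · K1 · (1 + 2 R_OS)^{ρ+q−1}. Then for all θ, θ̄ ∈ ℝ^d: ⟨θ − θ̄, h(θ) − h(θ̄)⟩ ≥ −L_OS |θ − θ̄|². -/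
open MeasureTheory ProbabilityTheory Real
open scoped RealInnerProductSpace ENNReal NNReal BigOperators

noncomputable section

/-- `h := ∇U`, the gradient of `U`. -/
def grad {d : ℕ} (U : EuclideanSpace ℝ (Fin d) → ℝ) (θ : EuclideanSpace ℝ (Fin d)) :
    EuclideanSpace ℝ (Fin d) :=
  gradient U θ

/-- `H := ∇²U`, the Hessian of `U`, as a continuous linear map. -/
def hess {d : ℕ} (U : EuclideanSpace ℝ (Fin d) → ℝ) (θ : EuclideanSpace ℝ (Fin d)) :
    EuclideanSpace ℝ (Fin d) →L[ℝ] EuclideanSpace ℝ (Fin d) :=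
  fderiv ℝ (fun x => gradient U x) θ

/-- `∇ h^{(i)}`, the gradient of the `i`-th component of `h = ∇U`. -/
def gradComp {d : ℕ} (U : EuclideanSpace ℝ (Fin d) → ℝ) (i : Fin d)
    (θ : EuclideanSpace ℝ (Fin d)) : EuclideanSpace ℝ (Fin d) :=
  gradient (fun y => gradient U y i) θ

/-- `∇² h^{(i)}`, the Hessian of the `i`-th component of `h = ∇U`. -/
def hessComp {d : ℕ} (U : EuclideanSpace ℝ (Fin d) → ℝ) (i : Fin d)
    (θ : EuclideanSpace ℝ (Fin d)) :
    EuclideanSpace ℝ (Fin d) →L[ℝ] EuclideanSpace ℝ (Fin d) :=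
  fderiv ℝ (fun x => gradComp U i x) θ

/-- `Υ`, the vector Laplacian of `h = ∇U`:  `Υ^{(i)}(θ) = ∑_j ∂²_{θ^{(j)}} h^{(i)}(θ)`. -/
def vecLap {d : ℕ} (U : EuclideanSpace ℝ (Fin d) → ℝ) (θ : EuclideanSpace ℝ (Fin d)) :
    EuclideanSpace ℝ (Fin d) :=
  (EuclideanSpace.equiv (Fin d) ℝ).symm
    (fun i => ∑ j, hessComp U i θ (EuclideanSpace.single j 1) j)

/-! Inside the ball of radius `R := 2 R_OS`, Assumption ALL applied between `θ` and `0` bounds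
each `∇²h⁽ⁱ⁾` by `K0 (1 + R)^(ρ+q-2)` (concavity of `t ↦ t^q` gives the factor `2^(1-q)`); the
mean value theorem then bounds each row `∇h⁽ⁱ⁾` of the Hessian by `K1 (1 + R)^(ρ+q-1)`, so the
Hessian has norm at most `L_OS` and `h` is `L_OS`-Lipschitz on the ball. Outside it
`a |θ|^r ≥ b |θ|^r̄`, so AC makes `h` monotone there. A segment from a point inside to a point
outside is split where it crosses the sphere of radius `R`: the outer piece contributes a
nonnegative term, the inner one at least `-L_OS |θ - θ'|²`. -/

open Real InnerProductSpace

lemma rpow_add_rpow_le_two_rpow_mul_add_rpow {p a b : ℝ} (ha : 0 ≤ a) (hb : 0 ≤ b) (hp₀ : 0 ≤ p)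
    (hp₁ : p ≤ 1) : a ^ p + b ^ p ≤ 2 ^ (1 - p) * (a + b) ^ p := by
  have hmid : 2⁻¹ * a ^ p + 2⁻¹ * b ^ p ≤ (2⁻¹ * a + 2⁻¹ * b) ^ p :=
    (concaveOn_rpow hp₀ hp₁).2 (Set.mem_Ici.2 ha) (Set.mem_Ici.2 hb)
      (by norm_num) (by norm_num) (by norm_num)
  rw [← mul_add, ← mul_add, mul_rpow (by norm_num) (by positivity), inv_rpow zero_le_two] at hmid
  rw [rpow_sub zero_lt_two, rpow_one]
  calc a ^ p + b ^ p = 2 * (2⁻¹ * (a ^ p + b ^ p)) := by ring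
    _ ≤ 2 * ((2 ^ p)⁻¹ * (a + b) ^ p) := by gcongr
    _ = 2 / 2 ^ p * (a + b) ^ p := by ring

lemma mul_rpow_le_mul_rpow_of_div_rpow_le {a b r r' t : ℝ} (ha : 0 < a) (hb : 0 < b) (hr : r' < r)
    (ht : (b / a) ^ (1 / (r - r')) ≤ t) : b * t ^ r' ≤ a * t ^ r := by
  have hba : 0 < b / a := div_pos hb ha
  have htpos : 0 < t := (rpow_pos_of_pos hba _).trans_le ht
  have hgap : b / a ≤ t ^ (r - r') := by
    calc b / a = ((b / a) ^ (1 / (r - r'))) ^ (r - r') := by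
          rw [← rpow_mul hba.le, one_div_mul_cancel (sub_ne_zero.2 hr.ne'), rpow_one]
      _ ≤ t ^ (r - r') := by gcongr
  calc b * t ^ r' = a * t ^ r' * (b / a) := by field_simp
    _ ≤ a * t ^ r' * t ^ (r - r') := by gcongr
    _ = a * t ^ r := by rw [mul_assoc, ← rpow_add htpos, add_sub_cancel]

section Growth

variable {E F : Type*}

lemma norm_le_of_norm_sub_le_holder [SeminormedAddCommGroup E] [SeminormedAddCommGroup F]
    {f : E → F} {L M p q : ℝ} (hp : 0 ≤ p) (hq₀ : 0 ≤ q) (hq₁ : q ≤ 1) (hLM : L ≤ M)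
    (h0 : ‖f 0‖ ≤ M)
    (hf : ∀ x, ‖f x - f 0‖ ≤ L * (1 + ‖x‖) ^ p * ‖x‖ ^ q) (x : E) :
    ‖f x‖ ≤ 2 ^ (1 - q) * M * (1 + ‖x‖) ^ (p + q) := by
  have hM : 0 ≤ M := (norm_nonneg _).trans h0
  have hA : 1 ≤ (1 + ‖x‖) ^ p := one_le_rpow (by linarith [norm_nonneg x]) hp
  have hconc := rpow_add_rpow_le_two_rpow_mul_add_rpow zero_le_one (norm_nonneg x) hq₀ hq₁
  rw [one_rpow] at hconc
  calc ‖f x‖ ≤ ‖f 0‖ + ‖f x - f 0‖ := norm_le_norm_add_norm_sub' _ _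
    _ ≤ M + M * (1 + ‖x‖) ^ p * ‖x‖ ^ q := by gcongr; exact (hf x).trans (by gcongr)
    _ ≤ M * (1 + ‖x‖) ^ p * (1 + ‖x‖ ^ q) := by nlinarith
    _ ≤ M * (1 + ‖x‖) ^ p * (2 ^ (1 - q) * (1 + ‖x‖) ^ q) := by gcongr
    _ = 2 ^ (1 - q) * M * (1 + ‖x‖) ^ (p + q) := by
      rw [rpow_add (by positivity)]; ring

lemma norm_sub_le_of_norm_fderiv_le_on_closedBall [NormedAddCommGroup E] [NormedSpace ℝ E]
    [NormedAddCommGroup F] [NormedSpace ℝ F] {f : E → F} (hf : Differentiable ℝ f) {C R : ℝ}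
    (hf' : ∀ y, ‖y‖ ≤ R → ‖fderiv ℝ f y‖ ≤ C) {x y : E} (hx : ‖x‖ ≤ R) (hy : ‖y‖ ≤ R) :
    ‖f x - f y‖ ≤ C * ‖x - y‖ :=
  (convex_closedBall (0 : E) R).norm_image_sub_le_of_norm_fderiv_le (fun z _ => hf z)
    (fun z hz => hf' z (mem_closedBall_zero_iff.1 hz)) (mem_closedBall_zero_iff.2 hy)
    (mem_closedBall_zero_iff.2 hx)

lemma norm_le_mul_one_add_rpow_of_norm_fderiv_le [NormedAddCommGroup E] [NormedSpace ℝ E]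
    [NormedAddCommGroup F] [NormedSpace ℝ F] {f : E → F} (hf : Differentiable ℝ f)
    {K K' s R : ℝ} (hs : 0 ≤ s) (hK'₀ : 0 ≤ K') (hK' : K' ≤ K) (h0 : ‖f 0‖ ≤ K)
    (hf' : ∀ y, ‖fderiv ℝ f y‖ ≤ K' * (1 + ‖y‖) ^ s) {x : E} (hx : ‖x‖ ≤ R) :
    ‖f x‖ ≤ K * (1 + R) ^ (s + 1) := by
  have hR : 0 ≤ R := (norm_nonneg x).trans hx
  have hK : 0 ≤ K := (norm_nonneg _).trans h0
  have hmv : ‖f x - f 0‖ ≤ K * (1 + R) ^ s * ‖x‖ := by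
    simpa using norm_sub_le_of_norm_fderiv_le_on_closedBall hf (C := K * (1 + R) ^ s)
      (fun y hy => (hf' y).trans (by gcongr)) hx (y := 0) (by simpa using hR)
  have hA : 1 ≤ (1 + R) ^ s := one_le_rpow (by linarith) hs
  calc ‖f x‖ ≤ ‖f 0‖ + ‖f x - f 0‖ := norm_le_norm_add_norm_sub' _ _
    _ ≤ K + K * (1 + R) ^ s * R := by gcongr; exact hmv.trans (by gcongr)
    _ ≤ K * (1 + R) ^ s * (1 + R) := by nlinarith
    _ = K * (1 + R) ^ (s + 1) := by rw [rpow_add_one (by positivity)]; ring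

end Growth

section Euclidean

variable {ι : Type*} [Fintype ι]

lemma EuclideanSpace.norm_le_sqrt_card_mul {x : EuclideanSpace ℝ ι} {C : ℝ} (hC : 0 ≤ C)
    (hx : ∀ i, |x i| ≤ C) : ‖x‖ ≤ √(Fintype.card ι) * C := by
  refine ((EuclideanSpace.basisFun ι ℝ).norm_le_card_mul_iSup_norm_inner x).trans ?_
  gcongr
  exact Real.iSup_le (fun i => by simpa using hx i) hC

variable {E : Type*} [NormedAddCommGroup E] [InnerProductSpace ℝ E] [CompleteSpace E]

lemma contDiff_gradient {f : E → ℝ} {m n : WithTop ℕ∞} (hf : ContDiff ℝ n f)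
    (hmn : m + 1 ≤ n) : ContDiff ℝ m (gradient f) :=
  (toDual ℝ E).symm.contDiff.comp (hf.fderiv_right hmn)

lemma fderiv_apply_coord_eq_inner_gradient {g : E → EuclideanSpace ℝ ι} {x : E}
    (hg : DifferentiableAt ℝ g x) (v : E) (i : ι) :
    fderiv ℝ g x v i = ⟪gradient (fun y => g y i) x, v⟫ := by
  have hcoord : HasFDerivAt (fun y => g y i)
      ((EuclideanSpace.proj (𝕜 := ℝ) i).comp (fderiv ℝ g x)) x :=
    (EuclideanSpace.proj (𝕜 := ℝ) i).hasFDerivAt.comp x hg.hasFDerivAt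
  rw [inner_gradient_left, hcoord.fderiv]
  rfl

lemma norm_fderiv_le_sqrt_card_mul {g : E → EuclideanSpace ℝ ι} {x : E}
    (hg : DifferentiableAt ℝ g x) {C : ℝ} (hC : 0 ≤ C)
    (h : ∀ i, ‖gradient (fun y => g y i) x‖ ≤ C) :
    ‖fderiv ℝ g x‖ ≤ √(Fintype.card ι) * C := by
  refine ContinuousLinearMap.opNorm_le_bound _ (by positivity) fun v => ?_
  rw [mul_assoc]
  refine EuclideanSpace.norm_le_sqrt_card_mul (by positivity) fun i => ?_
  rw [fderiv_apply_coord_eq_inner_gradient hg]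
  exact (abs_real_inner_le_norm _ _).trans (by gcongr; exact h i)

end Euclidean

section OneSided

variable {E : Type*} [NormedAddCommGroup E] [InnerProductSpace ℝ E]

lemma neg_mul_sq_le_inner_of_norm_le {v w : E} {ℓ : ℝ} (h : ‖w‖ ≤ ℓ * ‖v‖) :
    -(ℓ * ‖v‖ ^ 2) ≤ ⟪v, w⟫ := by
  have hvw : ‖v‖ * ‖w‖ ≤ ℓ * ‖v‖ ^ 2 := by
    calc ‖v‖ * ‖w‖ ≤ ‖v‖ * (ℓ * ‖v‖) := by gcongr
      _ = ℓ * ‖v‖ ^ 2 := by ring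
  linarith [neg_abs_le ⟪v, w⟫, abs_real_inner_le_norm v w]

variable {g : E → E} {R ℓ : ℝ}

lemma neg_mul_sq_le_inner_sub_of_crossing (hℓ : 0 ≤ ℓ)
    (hlip : ∀ x y, ‖x‖ ≤ R → ‖y‖ ≤ R → ‖g x - g y‖ ≤ ℓ * ‖x - y‖)
    (hmono : ∀ x y, R ≤ ‖x‖ → R ≤ ‖y‖ → 0 ≤ ⟪x - y, g x - g y⟫)
    {x y : E} (hx : R < ‖x‖) (hy : ‖y‖ ≤ R) :
    -(ℓ * ‖x - y‖ ^ 2) ≤ ⟪x - y, g x - g y⟫ := by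
  obtain ⟨s, ⟨hs₀, hs₁⟩, hzR⟩ := intermediate_value_Icc zero_le_one
    (by fun_prop : Continuous fun s : ℝ => ‖y + s • (x - y)‖).continuousOn
    (show R ∈ Set.Icc ‖y + (0 : ℝ) • (x - y)‖ ‖y + (1 : ℝ) • (x - y)‖ by
      simpa using ⟨hy, hx.le⟩)
  set z := y + s • (x - y)
  have hs₁' : s < 1 := lt_of_le_of_ne hs₁ (by rintro rfl; simp at hzR; linarith)
  have hxz : x - z = (1 - s) • (x - y) := by simp only [z]; module
  have hzy : z - y = s • (x - y) := by simp only [z]; module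
  have hfar : 0 ≤ ⟪x - y, g x - g z⟫ := by
    have h := hmono x z hx.le hzR.ge
    rw [hxz, real_inner_smul_left] at h
    exact (mul_nonneg_iff_of_pos_left (by linarith)).1 h
  have hnear : ‖g z - g y‖ ≤ ℓ * ‖x - y‖ := by
    calc ‖g z - g y‖ ≤ ℓ * ‖z - y‖ := hlip z y hzR.le hy
      _ = s * (ℓ * ‖x - y‖) := by rw [hzy, norm_smul, norm_of_nonneg hs₀]; ring
      _ ≤ ℓ * ‖x - y‖ := mul_le_of_le_one_left (by positivity) hs₁
  have hsplit : ⟪x - y, g x - g y⟫ = ⟪x - y, g x - g z⟫ + ⟪x - y, g z - g y⟫ := by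
    rw [← inner_add_right, sub_add_sub_cancel]
  linarith [neg_mul_sq_le_inner_of_norm_le hnear]

lemma neg_mul_sq_le_inner_sub_of_lipschitz_inside_of_monotone_outside (hℓ : 0 ≤ ℓ)
    (hlip : ∀ x y, ‖x‖ ≤ R → ‖y‖ ≤ R → ‖g x - g y‖ ≤ ℓ * ‖x - y‖)
    (hmono : ∀ x y, R ≤ ‖x‖ → R ≤ ‖y‖ → 0 ≤ ⟪x - y, g x - g y⟫) (x y : E) :
    -(ℓ * ‖x - y‖ ^ 2) ≤ ⟪x - y, g x - g y⟫ := by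
  rcases le_or_gt ‖x‖ R with hx | hx <;> rcases le_or_gt ‖y‖ R with hy | hy
  · exact neg_mul_sq_le_inner_of_norm_le (hlip x y hx hy)
  · have h := neg_mul_sq_le_inner_sub_of_crossing hℓ hlip hmono hy hx
    rwa [← neg_sub x y, ← neg_sub (g x) (g y), inner_neg_neg, norm_neg] at h
  · exact neg_mul_sq_le_inner_sub_of_crossing hℓ hlip hmono hx hy
  · exact (neg_nonpos.2 (by positivity)).trans (hmono x y hx.le hy.le)

lemma inner_sub_nonneg_of_le_norm {a b r r' R : ℝ} (ha : 0 < a) (hb : 0 < b) (hr : r' < r)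
    (hAC : ∀ x y, a * ‖x - y‖ ^ 2 * (‖x‖ ^ r + ‖y‖ ^ r)
      - b * ‖x - y‖ ^ 2 * (‖x‖ ^ r' + ‖y‖ ^ r') ≤ ⟪x - y, g x - g y⟫)
    (hR : (b / a) ^ (1 / (r - r')) ≤ R) {x y : E} (hx : R ≤ ‖x‖) (hy : R ≤ ‖y‖) :
    0 ≤ ⟪x - y, g x - g y⟫ := by
  have hx' := mul_rpow_le_mul_rpow_of_div_rpow_le ha hb hr (hR.trans hx)
  have hy' := mul_rpow_le_mul_rpow_of_div_rpow_le ha hb hr (hR.trans hy)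
  calc 0 ≤ ‖x - y‖ ^ 2 * ((a * ‖x‖ ^ r - b * ‖x‖ ^ r') + (a * ‖y‖ ^ r - b * ‖y‖ ^ r')) :=
        mul_nonneg (sq_nonneg _) (by linarith)
    _ = a * ‖x - y‖ ^ 2 * (‖x‖ ^ r + ‖y‖ ^ r) - b * ‖x - y‖ ^ 2 * (‖x‖ ^ r' + ‖y‖ ^ r') := by
        ring
    _ ≤ ⟪x - y, g x - g y⟫ := hAC x y

end OneSided

theorem one_sided_lipschitz_from_ALL_AC_general
    (d ρ : ℕ) (hρ : 2 ≤ ρ)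
    (q : ℝ) (hq0 : 0 < q) (hq1 : q ≤ 1)
    (U : EuclideanSpace ℝ (Fin d) → ℝ) (hU : ContDiff ℝ 3 U)
    -- Assumption ALL
    (L : ℝ)
    (hALL1 : ∀ (i : Fin d) (θ θ' : EuclideanSpace ℝ (Fin d)),
      ‖hessComp U i θ - hessComp U i θ'‖
        ≤ L * (1 + ‖θ‖ + ‖θ'‖) ^ ((ρ : ℝ) - 2) * ‖θ - θ'‖ ^ q)
    -- Assumption AC, with r := ρ + q - 1
    (r a b rbar : ℝ)
    (ha : 0 < a) (hb : 0 < b) (hrbar1 : rbar < r)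
    (hAC : ∀ θ θ' : EuclideanSpace ℝ (Fin d),
      a * ‖θ - θ'‖ ^ 2 * (‖θ‖ ^ r + ‖θ'‖ ^ r) - b * ‖θ - θ'‖ ^ 2 * (‖θ‖ ^ rbar + ‖θ'‖ ^ rbar)
        ≤ ⟪θ - θ', grad U θ - grad U θ'⟫)
    -- the constants
    (K0 K1 ROS LOS : ℝ)
    (hK0 : K0 = 2 ^ ((1 : ℝ) - q) * max L (⨆ i : Fin d, ‖hessComp U i 0‖))
    (hK1 : K1 = max K0 (⨆ i : Fin d, ‖gradComp U i 0‖))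
    (hROS : ROS = (b / a) ^ (1 / (r - rbar)))
    (hLOS : LOS = Real.sqrt d * K1 * (1 + 2 * ROS) ^ ((ρ : ℝ) + q - 1)) :
    ∀ θ θ' : EuclideanSpace ℝ (Fin d),
      -(LOS * ‖θ - θ'‖ ^ 2) ≤ ⟪θ - θ', grad U θ - grad U θ'⟫ := by
  have hρ2 : (0 : ℝ) ≤ ρ - 2 := by rw [sub_nonneg]; exact_mod_cast hρ
  have hK0nn : 0 ≤ K0 := hK0 ▸ mul_nonneg (by positivity)
    (le_max_of_le_right (Real.iSup_nonneg fun i => norm_nonneg _))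
  have hK1nn : 0 ≤ K1 := hK1 ▸ le_max_of_le_left hK0nn
  have hROSnn : 0 ≤ ROS := hROS ▸ by positivity
  have hgrad : ContDiff ℝ 2 (grad U) := contDiff_gradient hU (by norm_num)
  have hgradComp (i : Fin d) : ContDiff ℝ 1 (gradComp U i) :=
    contDiff_gradient ((EuclideanSpace.proj (𝕜 := ℝ) i).contDiff.comp hgrad) (by norm_num)
  have hHC (i : Fin d) (x : EuclideanSpace ℝ (Fin d)) :
      ‖hessComp U i x‖ ≤ K0 * (1 + ‖x‖) ^ ((ρ : ℝ) - 2 + q) := by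
    rw [hK0]
    exact norm_le_of_norm_sub_le_holder hρ2 hq0.le hq1 (le_max_left _ _)
      (le_max_of_le_right
        (le_ciSup (f := fun i => ‖hessComp U i 0‖) (Set.finite_range _).bddAbove i))
      (fun x => by simpa using hALL1 i x 0) x
  have hGC (i : Fin d) (x : EuclideanSpace ℝ (Fin d)) (hx : ‖x‖ ≤ 2 * ROS) :
      ‖gradComp U i x‖ ≤ K1 * (1 + 2 * ROS) ^ ((ρ : ℝ) + q - 1) := by
    rw [show (ρ : ℝ) + q - 1 = ρ - 2 + q + 1 by ring]
    exact norm_le_mul_one_add_rpow_of_norm_fderiv_le ((hgradComp i).differentiable one_ne_zero)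
      (by linarith) hK0nn (hK1 ▸ le_max_left _ _)
      (hK1 ▸ le_max_of_le_right
        (le_ciSup (f := fun i => ‖gradComp U i 0‖) (Set.finite_range _).bddAbove i))
      (hHC i) hx
  have hH (x : EuclideanSpace ℝ (Fin d)) (hx : ‖x‖ ≤ 2 * ROS) : ‖hess U x‖ ≤ LOS := by
    have h := norm_fderiv_le_sqrt_card_mul (hgrad.differentiable two_ne_zero x)
      (by positivity) (fun i => hGC i x hx)
    rwa [Fintype.card_fin, ← mul_assoc, ← hLOS] at h
  have hLOSnn : 0 ≤ LOS := hLOS ▸ by positivity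
  exact neg_mul_sq_le_inner_sub_of_lipschitz_inside_of_monotone_outside (R := 2 * ROS) hLOSnn
    (fun x y hx hy => norm_sub_le_of_norm_fderiv_le_on_closedBall
      (hgrad.differentiable two_ne_zero) hH hx hy)
    (fun x y hx hy => inner_sub_nonneg_of_le_norm ha hb hrbar1 hAC (by linarith) hx hy)

/-- Remark `rmk:oslc` of the paper: one-sided Lipschitz condition on
`h = ∇U` deduced from Assumptions ALL and AC. -/
theorem one_sided_lipschitz_from_ALL_AC
    (d ρ : ℕ) (hd : 1 ≤ d) (hρ : 2 ≤ ρ)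
    (q : ℝ) (hq0 : 0 < q) (hq1 : q ≤ 1)
    (U : EuclideanSpace ℝ (Fin d) → ℝ) (hU : ContDiff ℝ 3 U)
    -- Assumption ALL
    (L Kh KH : ℝ) (hL : 0 < L) (hKh : 0 < Kh) (hKH : 0 < KH)
    (hALL1 : ∀ (i : Fin d) (θ θ' : EuclideanSpace ℝ (Fin d)),
      ‖hessComp U i θ - hessComp U i θ'‖
        ≤ L * (1 + ‖θ‖ + ‖θ'‖) ^ ((ρ : ℝ) - 2) * ‖θ - θ'‖ ^ q)
    (hALL2 : ∀ θ : EuclideanSpace ℝ (Fin d), ‖grad U θ‖ ≤ Kh * (1 + ‖θ‖ ^ ((ρ : ℝ) + q)))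
    (hALL3 : ∀ θ : EuclideanSpace ℝ (Fin d), ‖hess U θ‖ ≤ KH * (1 + ‖θ‖ ^ ((ρ : ℝ) + q - 1)))
    -- Assumption AC, with r := ρ + q - 1
    (r a b rbar : ℝ) (hr : r = (ρ : ℝ) + q - 1)
    (ha : 0 < a) (hb : 0 < b) (hrbar0 : 0 ≤ rbar) (hrbar1 : rbar < r)
    (hAC : ∀ θ θ' : EuclideanSpace ℝ (Fin d),
      a * ‖θ - θ'‖ ^ 2 * (‖θ‖ ^ r + ‖θ'‖ ^ r) - b * ‖θ - θ'‖ ^ 2 * (‖θ‖ ^ rbar + ‖θ'‖ ^ rbar)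
        ≤ ⟪θ - θ', grad U θ - grad U θ'⟫)
    -- the constants
    (K0 K1 ROS LOS : ℝ)
    (hK0 : K0 = 2 ^ ((1 : ℝ) - q) * max L (⨆ i : Fin d, ‖hessComp U i 0‖))
    (hK1 : K1 = max K0 (⨆ i : Fin d, ‖gradComp U i 0‖))
    (hROS : ROS = (b / a) ^ (1 / (r - rbar)))
    (hLOS : LOS = Real.sqrt d * K1 * (1 + 2 * ROS) ^ ((ρ : ℝ) + q - 1)) :
    ∀ θ θ' : EuclideanSpace ℝ (Fin d),
      -(LOS * ‖θ - θ'‖ ^ 2) ≤ ⟪θ - θ', grad U θ - grad U θ'⟫ :=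
  one_sided_lipschitz_from_ALL_AC_general d ρ hρ q hq0 hq1 U hU L hALL1 r a b rbar ha hb hrbar1 hAC
    K0 K1 ROS LOS hK0 hK1 hROS hLOS
end
end

section
/- Let d ≥ 1, β > 0, a, b > 0, and let h : ℝ^d → ℝ^d satisfy the dissipativity condition ⟨θ, h(θ)⟩ ≥ a|θ|² − b for all θ ∈ ℝ^d. For an integer p ≥ 2 define V_p(θ) := (1+|θ|²)^{p/2} and set M := (1/3 + 4b/(3a) + 4d/(3aβ) + 4(p−2)/(3aβ))^{1/2}. Then for all θ ∈ ℝ^d: ΔV_p(θ)/β − ⟨∇V_p(θ), h(θ)⟩ ≤ −(a p/4) V_p(θ) + (3 a p/4)(1 + M²)^{p/2}, where ΔV_p and ∇V_p denote the Laplacian and gradient of V_p. -/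
open MeasureTheory ProbabilityTheory Real
open scoped RealInnerProductSpace ENNReal NNReal BigOperators

noncomputable section

/-- The Laplacian of a scalar function on `ℝ^d`: `Δf(θ) = ∑_j ∂²_{θ^{(j)}} f(θ)`. -/
def lapl {d : ℕ} (f : EuclideanSpace ℝ (Fin d) → ℝ) (θ : EuclideanSpace ℝ (Fin d)) : ℝ :=
  ∑ j, fderiv ℝ (fun x => fderiv ℝ f x (EuclideanSpace.single j 1)) θ
    (EuclideanSpace.single j 1)

/-- The Lyapunov function `V_p(θ) = (1 + |θ|²)^{p/2}`. -/
def lyapV {d : ℕ} (p : ℕ) (θ : EuclideanSpace ℝ (Fin d)) : ℝ :=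
  (1 + ‖θ‖ ^ 2) ^ ((p : ℝ) / 2)

/-
With `G = 1 + |θ|²` and `q = p/2`, so that `V_p = G^q`, one has `∇V_p = p G^{q-1} θ` and
`ΔV_p = p(p-2) G^{q-2} |θ|² + p d G^{q-1} ≤ p (p-2+d) G^{q-1}`, while dissipativity gives
`⟨∇V_p, h⟩ ≥ p G^{q-1} (a G - a - b)`. As `M` is chosen so that `(3a/4)(1 + M²) = (d+p-2)/β + a + b`,
the drift is at most `p G^{q-1} ((3a/4)(1 + M²) - a G) = -(ap/4) G^q + (3ap/4) G^{q-1} (1 + M² - G)`,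
and `G^{q-1} (K - G) ≤ K^q` for `G, K ≥ 0`, `q ≥ 1`.
-/

theorem Real.rpow_sub_one_mul_sub_le_rpow {G K q : ℝ} (hG : 0 ≤ G) (hK : 0 ≤ K) (hq : 1 ≤ q) :
    G ^ (q - 1) * (K - G) ≤ K ^ q := by
  rcases le_or_gt K G with hKG | hGK
  · exact (mul_nonpos_of_nonneg_of_nonpos (rpow_nonneg hG _) (by linarith)).trans
      (rpow_nonneg hK _)
  · calc G ^ (q - 1) * (K - G) ≤ K ^ (q - 1) * K := by
          gcongr; linarith
      _ = K ^ q := by rw [← rpow_add_one (by linarith), sub_add_cancel]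

section InnerProductSpace

variable {E : Type*} [NormedAddCommGroup E] [InnerProductSpace ℝ E]

theorem hasFDerivAt_one_add_norm_sq_rpow (q : ℝ) (x : E) :
    HasFDerivAt (fun y : E => (1 + ‖y‖ ^ 2) ^ q)
      ((2 * q * (1 + ‖x‖ ^ 2) ^ (q - 1)) • innerSL ℝ x) x := by
  refine (((hasStrictFDerivAt_norm_sq x).hasFDerivAt.const_add 1).rpow_const
    (Or.inl (by positivity))).congr_fderiv ?_
  ext v
  simp
  ring

theorem fderiv_one_add_norm_sq_rpow_apply (q : ℝ) (x e : E) :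
    fderiv ℝ (fun y : E => (1 + ‖y‖ ^ 2) ^ q) x e = 2 * q * (1 + ‖x‖ ^ 2) ^ (q - 1) * ⟪x, e⟫ := by
  simp [(hasFDerivAt_one_add_norm_sq_rpow q x).fderiv]

theorem gradient_one_add_norm_sq_rpow [CompleteSpace E] (q : ℝ) (x : E) :
    gradient (fun y : E => (1 + ‖y‖ ^ 2) ^ q) x = (2 * q * (1 + ‖x‖ ^ 2) ^ (q - 1)) • x := by
  refine (hasGradientAt_iff_hasFDerivAt.mpr ?_).gradient
  refine (hasFDerivAt_one_add_norm_sq_rpow q x).congr_fderiv ?_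
  ext v
  simp

theorem fderiv_fderiv_one_add_norm_sq_rpow_apply (q : ℝ) (x e : E) :
    fderiv ℝ (fun y => fderiv ℝ (fun y : E => (1 + ‖y‖ ^ 2) ^ q) y e) x e
      = 4 * q * (q - 1) * (1 + ‖x‖ ^ 2) ^ (q - 2) * ⟪x, e⟫ ^ 2
        + 2 * q * (1 + ‖x‖ ^ 2) ^ (q - 1) * ‖e‖ ^ 2 := by
  have hfun : (fun y => fderiv ℝ (fun y : E => (1 + ‖y‖ ^ 2) ^ q) y e)
      = fun y => 2 * q * (1 + ‖y‖ ^ 2) ^ (q - 1) * innerSL ℝ e y := by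
    ext y
    rw [fderiv_one_add_norm_sq_rpow_apply, innerSL_apply_apply, real_inner_comm]
  have hprod : HasFDerivAt (fun y => 2 * q * (1 + ‖y‖ ^ 2) ^ (q - 1) * innerSL ℝ e y) _ x :=
    ((hasFDerivAt_one_add_norm_sq_rpow (q - 1) x).const_mul (2 * q)).mul (innerSL ℝ e).hasFDerivAt
  rw [hfun, hprod.fderiv]
  simp only [coe_innerSL_apply, add_apply, smul_apply, real_inner_self_eq_norm_sq, smul_eq_mul,
    real_inner_comm e x]
  rw [show q - 1 - 1 = q - 2 by ring]
  ring

end InnerProductSpace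

theorem lapl_one_add_norm_sq_rpow {d : ℕ} (q : ℝ) (x : EuclideanSpace ℝ (Fin d)) :
    lapl (fun y => (1 + ‖y‖ ^ 2) ^ q) x
      = 4 * q * (q - 1) * (1 + ‖x‖ ^ 2) ^ (q - 2) * ‖x‖ ^ 2
        + 2 * q * d * (1 + ‖x‖ ^ 2) ^ (q - 1) := by
  simp only [lapl, fderiv_fderiv_one_add_norm_sq_rpow_apply]
  simp only [EuclideanSpace.real_norm_sq_eq, EuclideanSpace.inner_single_right, ringHom_apply,
    one_mul, PiLp.norm_single, norm_one, one_pow, mul_one, Finset.sum_add_distrib, ← Finset.mul_sum,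
    Finset.sum_const, Finset.card_univ, Fintype.card_fin, nsmul_eq_mul]
  ring

theorem lapl_one_add_norm_sq_rpow_le {d : ℕ} {q : ℝ} (hq : 1 ≤ q) (x : EuclideanSpace ℝ (Fin d)) :
    lapl (fun y => (1 + ‖y‖ ^ 2) ^ q) x ≤ 2 * q * (2 * q - 2 + d) * (1 + ‖x‖ ^ 2) ^ (q - 1) := by
  have hG : 0 < 1 + ‖x‖ ^ 2 := by positivity
  have hpow : (1 + ‖x‖ ^ 2) ^ (q - 2) * ‖x‖ ^ 2 ≤ (1 + ‖x‖ ^ 2) ^ (q - 1) := by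
    calc (1 + ‖x‖ ^ 2) ^ (q - 2) * ‖x‖ ^ 2 ≤ (1 + ‖x‖ ^ 2) ^ (q - 2) * (1 + ‖x‖ ^ 2) := by
          gcongr; linarith
      _ = (1 + ‖x‖ ^ 2) ^ (q - 1) := by rw [← rpow_add_one hG.ne']; ring_nf
  rw [lapl_one_add_norm_sq_rpow]
  linarith [mul_le_mul_of_nonneg_left hpow (by nlinarith : 0 ≤ 4 * q * (q - 1))]

theorem lapl_div_sub_inner_gradient_one_add_norm_sq_rpow_le {d : ℕ} {q β a b : ℝ} (hq : 1 ≤ q)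
    (hβ : 0 < β) {x v : EuclideanSpace ℝ (Fin d)} (hdiss : a * ‖x‖ ^ 2 - b ≤ ⟪x, v⟫) :
    lapl (fun y => (1 + ‖y‖ ^ 2) ^ q) x / β - ⟪gradient (fun y => (1 + ‖y‖ ^ 2) ^ q) x, v⟫
      ≤ 2 * q * (1 + ‖x‖ ^ 2) ^ (q - 1) * ((2 * q - 2 + d) / β + a + b - a * (1 + ‖x‖ ^ 2)) := by
  have hgrad : 2 * q * (1 + ‖x‖ ^ 2) ^ (q - 1) * (a * ‖x‖ ^ 2 - b)
      ≤ ⟪gradient (fun y => (1 + ‖y‖ ^ 2) ^ q) x, v⟫ := by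
    rw [gradient_one_add_norm_sq_rpow, real_inner_smul_left]
    gcongr
  calc _ ≤ 2 * q * (2 * q - 2 + d) * (1 + ‖x‖ ^ 2) ^ (q - 1) / β
        - 2 * q * (1 + ‖x‖ ^ 2) ^ (q - 1) * (a * ‖x‖ ^ 2 - b) := by
        gcongr
        exact lapl_one_add_norm_sq_rpow_le hq x
    _ = _ := by
        field_simp
        ring

theorem lyapunov_drift_condition_general
    (d : ℕ) (β : ℝ) (hβ : 0 < β)
    (a b : ℝ) (ha : 0 < a) (hb : 0 < b)
    (h : EuclideanSpace ℝ (Fin d) → EuclideanSpace ℝ (Fin d))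
    (hdiss : ∀ θ : EuclideanSpace ℝ (Fin d), a * ‖θ‖ ^ 2 - b ≤ ⟪θ, h θ⟫)
    (p : ℕ) (hp : 2 ≤ p)
    (M : ℝ)
    (hM : M = (1 / 3 + 4 * b / (3 * a) + 4 * d / (3 * a * β)
        + 4 * ((p : ℝ) - 2) / (3 * a * β)) ^ ((1 : ℝ) / 2)) :
    ∀ θ : EuclideanSpace ℝ (Fin d),
      lapl (lyapV p) θ / β - ⟪gradient (lyapV p) θ, h θ⟫
        ≤ -(a * p / 4) * lyapV p θ + (3 * a * p / 4) * (1 + M ^ 2) ^ ((p : ℝ) / 2) := by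
  intro θ
  have hp' : (2 : ℝ) ≤ p := by exact_mod_cast hp
  have hq : 1 ≤ (p : ℝ) / 2 := by linarith
  have hM2 : 3 * a / 4 * (1 + M ^ 2) = (2 * ((p : ℝ) / 2) - 2 + d) / β + a + b := by
    have : (0 : ℝ) ≤ 4 * ((p : ℝ) - 2) / (3 * a * β) := by
      apply div_nonneg <;> [linarith; positivity]
    rw [hM, ← sqrt_eq_rpow, sq_sqrt (by positivity)]
    field_simp
    ring
  set G := 1 + ‖θ‖ ^ 2
  have hG : 0 < G := by positivity
  have hV : lyapV p θ = G ^ ((p : ℝ) / 2 - 1) * G := by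
    rw [← rpow_add_one hG.ne', sub_add_cancel]; rfl
  have hkey := rpow_sub_one_mul_sub_le_rpow hG.le (by positivity : 0 ≤ 1 + M ^ 2) hq
  calc _ ≤ _ := lapl_div_sub_inner_gradient_one_add_norm_sq_rpow_le hq hβ (hdiss θ)
    _ = -(a * p / 4) * (G ^ ((p : ℝ) / 2 - 1) * G)
          + 3 * a * p / 4 * (G ^ ((p : ℝ) / 2 - 1) * (1 + M ^ 2 - G)) := by
        rw [← hM2]; ring
    _ ≤ _ := by rw [hV]; gcongr

/-- Lemma `lem:driftcon` of the paper, cf. Lemma 3.5 of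
Chau–Moulines–Rásonyi–Sabanis–Zhang: drift condition for the Lyapunov function `V_p`
under dissipativity of `h`. -/
theorem lyapunov_drift_condition
    (d : ℕ) (hd : 1 ≤ d) (β : ℝ) (hβ : 0 < β)
    (a b : ℝ) (ha : 0 < a) (hb : 0 < b)
    (h : EuclideanSpace ℝ (Fin d) → EuclideanSpace ℝ (Fin d))
    (hdiss : ∀ θ : EuclideanSpace ℝ (Fin d), a * ‖θ‖ ^ 2 - b ≤ ⟪θ, h θ⟫)
    (p : ℕ) (hp : 2 ≤ p)
    (M : ℝ)
    (hM : M = (1 / 3 + 4 * b / (3 * a) + 4 * d / (3 * a * β)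
        + 4 * ((p : ℝ) - 2) / (3 * a * β)) ^ ((1 : ℝ) / 2)) :
    ∀ θ : EuclideanSpace ℝ (Fin d),
      lapl (lyapV p) θ / β - ⟪gradient (lyapV p) θ, h θ⟫
        ≤ -(a * p / 4) * lyapV p θ + (3 * a * p / 4) * (1 + M ^ 2) ^ ((p : ℝ) / 2) :=
  lyapunov_drift_condition_general d β hβ a b ha hb h hdiss p hp M hM
end
end

section
/- Let d ≥ 1 and let â ∈ ℝ^d with |â| > 1. Define U : ℝ^d → ℝ by U(θ) := (1/2)|θ − â|² − log(1 + exp(−2⟨θ, â⟩)). Then U is three times continuously differentiable and: (i) U satisfies Assumption ALLlip with q = 1, L̄1 = 56|â|⁴, L̄2 = 8|â|³ and L̄3 = 1 + 4|â|²; (ii) U satisfies Assumption ADlip with ā = 1/2 and b̄ = |â|²/2, i.e. ⟨θ, ∇U(θ)⟩ ≥ (1/2)(|θ|² − |â|²) for all θ ∈ ℝ^d. -/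
/-!
Write `s = ⟪a, θ⟫`. Since `d/ds log (1 + e^{-2s}) = tanh s - 1`, the gradient is
`∇U(θ) = θ - tanh s • a`, the Hessian is `I - (1 - tanh² s) a aᵀ`, and for a fixed vector `e` the
Hessian of `⟪e, ∇U⟫` is `2 ⟪e, a⟫ tanh s (1 - tanh² s) a aᵀ`. Each of them is a fixed operator plus
a Lipschitz function of `s` times a fixed operator: `tanh`, `tanh²` and `tanh (1 - tanh²)` are
polynomials on `[-1, 1]` composed with the `1`-Lipschitz `tanh`, and `θ ↦ s` is `‖a‖`-Lipschitz.
This gives the constants `1 + ‖a‖²`, `2‖a‖³` and `4‖a‖⁴`. Dissipativity follows from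
`s tanh s ≤ |s| ≤ ‖a‖ ‖θ‖` and `2‖a‖‖θ‖ ≤ ‖a‖² + ‖θ‖²`.
-/

open MeasureTheory ProbabilityTheory Real
open scoped RealInnerProductSpace ENNReal NNReal BigOperators

noncomputable section

open Set InnerProductSpace

namespace Real

theorem hasDerivAt_tanh (x : ℝ) : HasDerivAt tanh (1 - tanh x ^ 2) x := by
  have hdiv := (hasDerivAt_sinh x).div (hasDerivAt_cosh x) (cosh_pos x).ne'
  rw [show sinh / cosh = tanh from funext fun y => (tanh_eq_sinh_div_cosh y).symm] at hdiv
  refine hdiv.congr_deriv ?_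
  rw [tanh_eq_sinh_div_cosh]
  field_simp

theorem lipschitzWith_tanh : LipschitzWith 1 tanh :=
  lipschitzWith_of_nnnorm_deriv_le (fun x => (hasDerivAt_tanh x).differentiableAt) fun x => by
    rw [(hasDerivAt_tanh x).deriv, ← NNReal.coe_le_coe, coe_nnnorm, NNReal.coe_one, norm_eq_abs,
      abs_le]
    constructor <;> nlinarith [tanh_sq_lt_one x, sq_nonneg (tanh x)]

theorem lipschitzWith_comp_tanh {p : ℝ → ℝ} {K : ℝ≥0} (hp : LipschitzOnWith K p (Icc (-1) 1)) :
    LipschitzWith K fun x => p (tanh x) := by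
  simpa [Function.comp_def] using hp.comp lipschitzWith_tanh.lipschitzOnWith (s := univ)
    fun x _ => ⟨(neg_one_lt_tanh x).le, (tanh_lt_one x).le⟩

end Real

theorem lipschitzOnWith_sq_Icc : LipschitzOnWith 2 (fun t : ℝ => t ^ 2) (Icc (-1) 1) := by
  refine LipschitzOnWith.of_dist_le_mul fun t ht u hu => ?_
  simp only [dist_eq, NNReal.coe_ofNat]
  rw [show t ^ 2 - u ^ 2 = (t + u) * (t - u) by ring, abs_mul]
  gcongr
  rw [abs_le]
  constructor <;> linarith [ht.1, ht.2, hu.1, hu.2]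

theorem lipschitzOnWith_mul_one_sub_sq_Icc :
    LipschitzOnWith 2 (fun t : ℝ => t * (1 - t ^ 2)) (Icc (-1) 1) := by
  refine LipschitzOnWith.of_dist_le_mul fun t ⟨ht₁, ht₂⟩ u ⟨hu₁, hu₂⟩ => ?_
  simp only [dist_eq, NNReal.coe_ofNat]
  rw [show t * (1 - t ^ 2) - u * (1 - u ^ 2) = (1 - (t ^ 2 + t * u + u ^ 2)) * (t - u) by ring,
    abs_mul]
  gcongr
  rw [abs_le]
  constructor <;> nlinarith [sq_nonneg (t + u), mul_nonneg (sub_nonneg.2 ht₂) (sub_nonneg.2 hu₂),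
    mul_nonneg (neg_le_iff_add_nonneg.1 ht₁) (neg_le_iff_add_nonneg.1 hu₁)]

theorem hasDerivAt_log_one_add_exp_neg_two_mul (t : ℝ) :
    HasDerivAt (fun t => log (1 + exp (-(2 * t)))) (tanh t - 1) t := by
  have hexp : HasDerivAt (fun t => 1 + exp (-(2 * t))) (exp (-(2 * t)) * -2) t := by
    simpa using (((hasDerivAt_id t).const_mul 2).neg.exp).const_add 1
  refine (hexp.log (by positivity)).congr_deriv ?_
  rw [tanh_eq, show -(2 * t) = -t + -t by ring, exp_add]
  have := exp_pos t
  have hne : exp t * exp (-t) = 1 := by rw [← exp_add]; simp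
  field_simp
  linear_combination (-2 * exp (-t)) * hne

section Potential

variable {F : Type*} [NormedAddCommGroup F] [InnerProductSpace ℝ F]

theorem hasFDerivAt_comp_inner_smul {G : Type*} [NormedAddCommGroup G] [NormedSpace ℝ G]
    {f : ℝ → ℝ} {f' : ℝ} {a θ : F} (v : G) (hf : HasDerivAt f f' ⟪a, θ⟫) :
    HasFDerivAt (fun x => f ⟪a, x⟫ • v) (f' • rankOne ℝ v a) θ := by
  refine ((hf.comp_hasFDerivAt θ (innerSL ℝ a).hasFDerivAt).smul_const v).congr_fderiv ?_
  ext x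
  simp [mul_smul]

theorem norm_comp_inner_smul_sub_le {G : Type*} [NormedAddCommGroup G] [NormedSpace ℝ G]
    {f : ℝ → ℝ} {K : ℝ≥0} (hf : LipschitzWith K f) (a θ θ' : F) (v : G) :
    ‖f ⟪a, θ⟫ • v - f ⟪a, θ'⟫ • v‖ ≤ K * ‖a‖ * ‖v‖ * ‖θ - θ'‖ := by
  rw [← sub_smul, norm_smul]
  calc ‖f ⟪a, θ⟫ - f ⟪a, θ'⟫‖ * ‖v‖ ≤ K * ‖⟪a, θ - θ'⟫‖ * ‖v‖ := by
        rw [inner_sub_right]; gcongr; exact hf.norm_sub_le _ _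
    _ ≤ K * (‖a‖ * ‖θ - θ'‖) * ‖v‖ := by gcongr; exact norm_inner_le_norm a _
    _ = K * ‖a‖ * ‖v‖ * ‖θ - θ'‖ := by ring

/-- `-log` of the density of `½ N(a, I) + ½ N(-a, I)`, up to an additive constant. -/
def mixturePotential (a θ : F) : ℝ :=
  1 / 2 * ‖θ - a‖ ^ 2 - log (1 + exp (-(2 * ⟪θ, a⟫)))

theorem contDiff_mixturePotential (a : F) {n : WithTop ℕ∞} : ContDiff ℝ n (mixturePotential a) := by
  have hexponent : ContDiff ℝ n fun θ : F => -(2 * ⟪θ, a⟫) :=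
    (contDiff_const.mul (contDiff_id.inner ℝ contDiff_const)).neg
  exact (contDiff_const.mul ((contDiff_id.sub contDiff_const).norm_sq ℝ)).sub
    ((contDiff_const.add hexponent.exp).log fun θ => by positivity)

variable [CompleteSpace F]

theorem hasGradientAt_mixturePotential (a θ : F) :
    HasGradientAt (mixturePotential a) (θ - tanh ⟪a, θ⟫ • a) θ := by
  have hsq := (((hasFDerivAt_id θ).sub_const a).norm_sq).const_mul (1 / 2 : ℝ)
  have hlog := (hasDerivAt_log_one_add_exp_neg_two_mul ⟪a, θ⟫).comp_hasFDerivAt θ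
    (innerSL ℝ a).hasFDerivAt
  have hU : mixturePotential a = fun x =>
      1 / 2 * ‖id x - a‖ ^ 2 - log (1 + exp (-(2 * innerSL ℝ a x))) := by
    ext x; simp [mixturePotential, real_inner_comm]
  rw [hU]
  refine hasGradientAt_iff_hasFDerivAt.mpr ((hsq.sub hlog).congr_fderiv ?_)
  ext x
  simp only [id_eq, map_sub, ContinuousLinearMap.comp_id, sub_apply,
    smul_apply, toDual_apply_apply, coe_innerSL_apply, nsmul_eq_mul, smul_eq_mul, map_smul]
  ring

theorem gradient_mixturePotential (a : F) :
    gradient (mixturePotential a) = fun θ => θ - tanh ⟪a, θ⟫ • a :=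
  gradient_eq (hasGradientAt_mixturePotential a)

theorem hasFDerivAt_gradient_mixturePotential (a θ : F) :
    HasFDerivAt (gradient (mixturePotential a))
      (ContinuousLinearMap.id ℝ F - (1 - tanh ⟪a, θ⟫ ^ 2) • rankOne ℝ a a) θ := by
  rw [gradient_mixturePotential]
  exact (hasFDerivAt_id θ).sub (hasFDerivAt_comp_inner_smul a (hasDerivAt_tanh _))

theorem hasGradientAt_inner_gradient_mixturePotential (a e θ : F) :
    HasGradientAt (fun x => ⟪e, gradient (mixturePotential a) x⟫)
      (e - ((1 - tanh ⟪a, θ⟫ ^ 2) * ⟪e, a⟫) • a) θ := by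
  refine hasGradientAt_iff_hasFDerivAt.mpr
    (((hasFDerivAt_const e θ).inner ℝ (hasFDerivAt_gradient_mixturePotential a θ)).congr_fderiv ?_)
  ext x
  simp only [ContinuousLinearMap.comp_apply, ContinuousLinearMap.prod_apply, zero_apply,
    sub_apply, ContinuousLinearMap.id_apply, smul_apply, rankOne_apply, fderivInnerCLM_apply,
    inner_sub_right, real_inner_smul_right, inner_zero_left, add_zero, toDual_apply_apply,
    real_inner_comm x]
  ring

theorem hasFDerivAt_gradient_inner_gradient_mixturePotential (a e θ : F) :
    HasFDerivAt (gradient fun x => ⟪e, gradient (mixturePotential a) x⟫)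
      ((2 * ⟪e, a⟫ * (tanh ⟪a, θ⟫ * (1 - tanh ⟪a, θ⟫ ^ 2))) • rankOne ℝ a a) θ := by
  rw [gradient_eq (hasGradientAt_inner_gradient_mixturePotential a e)]
  have hcoeff := (((hasDerivAt_tanh ⟪a, θ⟫).pow 2).const_sub 1).mul_const ⟪e, a⟫
  refine ((hasFDerivAt_const e θ).sub (hasFDerivAt_comp_inner_smul a hcoeff)).congr_fderiv ?_
  ext x
  simp only [Nat.add_one_sub_one, pow_one, neg_mul, neg_smul, sub_neg_eq_add, zero_add,
    smul_apply, rankOne_apply]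
  congr 1; ring

theorem norm_gradient_mixturePotential_sub_le (a θ θ' : F) :
    ‖gradient (mixturePotential a) θ - gradient (mixturePotential a) θ'‖
      ≤ (1 + ‖a‖ ^ 2) * ‖θ - θ'‖ := by
  rw [gradient_mixturePotential, sub_sub_sub_comm]
  calc ‖θ - θ' - (tanh ⟪a, θ⟫ • a - tanh ⟪a, θ'⟫ • a)‖
      ≤ ‖θ - θ'‖ + ‖tanh ⟪a, θ⟫ • a - tanh ⟪a, θ'⟫ • a‖ := norm_sub_le _ _
    _ ≤ ‖θ - θ'‖ + 1 * ‖a‖ * ‖a‖ * ‖θ - θ'‖ := by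
        gcongr; exact_mod_cast norm_comp_inner_smul_sub_le lipschitzWith_tanh a θ θ' a
    _ = (1 + ‖a‖ ^ 2) * ‖θ - θ'‖ := by ring

theorem norm_fderiv_gradient_mixturePotential_sub_le (a θ θ' : F) :
    ‖fderiv ℝ (gradient (mixturePotential a)) θ - fderiv ℝ (gradient (mixturePotential a)) θ'‖
      ≤ 2 * ‖a‖ ^ 3 * ‖θ - θ'‖ := by
  rw [(hasFDerivAt_gradient_mixturePotential a θ).fderiv,
    (hasFDerivAt_gradient_mixturePotential a θ').fderiv,
    show ∀ s t : ℝ, (ContinuousLinearMap.id ℝ F - (1 - s) • rankOne ℝ a a)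
        - (ContinuousLinearMap.id ℝ F - (1 - t) • rankOne ℝ a a)
        = s • rankOne ℝ a a - t • rankOne ℝ a a from fun s t => by module]
  calc _ ≤ 2 * ‖a‖ * ‖rankOne ℝ a a‖ * ‖θ - θ'‖ :=
        norm_comp_inner_smul_sub_le (lipschitzWith_comp_tanh lipschitzOnWith_sq_Icc) a θ θ' _
    _ = 2 * ‖a‖ ^ 3 * ‖θ - θ'‖ := by rw [norm_rankOne]; ring

theorem norm_fderiv_gradient_inner_gradient_mixturePotential_sub_le (a e θ θ' : F) :
    ‖fderiv ℝ (gradient fun x => ⟪e, gradient (mixturePotential a) x⟫) θ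
        - fderiv ℝ (gradient fun x => ⟪e, gradient (mixturePotential a) x⟫) θ'‖
      ≤ 4 * |⟪e, a⟫| * ‖a‖ ^ 3 * ‖θ - θ'‖ := by
  have hsplit : ∀ s : ℝ, (2 * ⟪e, a⟫ * s) • rankOne ℝ a a = s • (2 * ⟪e, a⟫) • rankOne ℝ a a :=
    fun s => by rw [smul_smul, mul_comm]
  simp only [(hasFDerivAt_gradient_inner_gradient_mixturePotential a e _).fderiv, hsplit]
  calc _ ≤ 2 * ‖a‖ * ‖(2 * ⟪e, a⟫) • rankOne ℝ a a‖ * ‖θ - θ'‖ :=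
        norm_comp_inner_smul_sub_le (lipschitzWith_comp_tanh lipschitzOnWith_mul_one_sub_sq_Icc)
          a θ θ' _
    _ = 4 * |⟪e, a⟫| * ‖a‖ ^ 3 * ‖θ - θ'‖ := by
        rw [norm_smul, norm_rankOne, norm_mul, Real.norm_two, norm_eq_abs]; ring

theorem half_sub_le_inner_gradient_mixturePotential (a θ : F) :
    1 / 2 * (‖θ‖ ^ 2 - ‖a‖ ^ 2) ≤ ⟪θ, gradient (mixturePotential a) θ⟫ := by
  rw [gradient_mixturePotential, inner_sub_right, real_inner_self_eq_norm_sq, real_inner_smul_right,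
    real_inner_comm a θ]
  have htanh : tanh ⟪a, θ⟫ * ⟪a, θ⟫ ≤ ‖a‖ * ‖θ‖ :=
    calc tanh ⟪a, θ⟫ * ⟪a, θ⟫ ≤ |tanh ⟪a, θ⟫| * |⟪a, θ⟫| := by rw [← abs_mul]; exact le_abs_self _
      _ ≤ 1 * (‖a‖ * ‖θ‖) := by
          gcongr
          exacts [(abs_tanh_lt_one _).le, abs_real_inner_le_norm a θ]
      _ = ‖a‖ * ‖θ‖ := one_mul _
  nlinarith [sq_nonneg (‖a‖ - ‖θ‖)]

end Potential

section Euclidean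

variable {d : ℕ}

theorem gradComp_eq_gradient_inner (U : EuclideanSpace ℝ (Fin d) → ℝ) (i : Fin d) :
    gradComp U i = gradient fun y => ⟪EuclideanSpace.single i 1, gradient U y⟫ := by
  ext1 θ
  simp only [gradComp, EuclideanSpace.inner_single_left, map_one, one_mul]

theorem norm_hessComp_mixturePotential_sub_le (a : EuclideanSpace ℝ (Fin d)) (i : Fin d)
    (θ θ' : EuclideanSpace ℝ (Fin d)) :
    ‖hessComp (mixturePotential a) i θ - hessComp (mixturePotential a) i θ'‖
      ≤ 4 * ‖a‖ ^ 4 * ‖θ - θ'‖ := by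
  have hcoord : |⟪EuclideanSpace.single i 1, a⟫| ≤ ‖a‖ := by
    simpa [EuclideanSpace.inner_single_left] using PiLp.norm_apply_le a i
  simp only [hessComp, gradComp_eq_gradient_inner]
  refine (norm_fderiv_gradient_inner_gradient_mixturePotential_sub_le a _ θ θ').trans ?_
  rw [show 4 * ‖a‖ ^ 4 * ‖θ - θ'‖ = 4 * ‖a‖ * ‖a‖ ^ 3 * ‖θ - θ'‖ by ring]
  gcongr

end Euclidean

theorem gaussian_mixture_satisfies_assumptions_general
    (d : ℕ)
    (ahat : EuclideanSpace ℝ (Fin d))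
    (U : EuclideanSpace ℝ (Fin d) → ℝ)
    (hUdef : ∀ θ : EuclideanSpace ℝ (Fin d),
      U θ = (1 / 2) * ‖θ - ahat‖ ^ 2 - Real.log (1 + Real.exp (-(2 * ⟪θ, ahat⟫)))) :
    ContDiff ℝ 3 U ∧
    -- Assumption ALLlip with q = 1
    (∀ (i : Fin d) (θ θ' : EuclideanSpace ℝ (Fin d)),
        ‖hessComp U i θ - hessComp U i θ'‖ ≤ 56 * ‖ahat‖ ^ 4 * ‖θ - θ'‖) ∧
    (∀ θ θ' : EuclideanSpace ℝ (Fin d),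
        ‖hess U θ - hess U θ'‖ ≤ 8 * ‖ahat‖ ^ 3 * ‖θ - θ'‖) ∧
    (∀ θ θ' : EuclideanSpace ℝ (Fin d),
        ‖grad U θ - grad U θ'‖ ≤ (1 + 4 * ‖ahat‖ ^ 2) * ‖θ - θ'‖) ∧
    -- Assumption ADlip with ā = 1/2 and b̄ = |â|²/2
    (∀ θ : EuclideanSpace ℝ (Fin d),
        (1 / 2) * (‖θ‖ ^ 2 - ‖ahat‖ ^ 2) ≤ ⟪θ, grad U θ⟫) := by
  obtain rfl : U = mixturePotential ahat := funext hUdef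
  refine ⟨contDiff_mixturePotential ahat, fun i θ θ' => ?_, fun θ θ' => ?_, fun θ θ' => ?_,
    half_sub_le_inner_gradient_mixturePotential ahat⟩
  · exact (norm_hessComp_mixturePotential_sub_le ahat i θ θ').trans (by gcongr; norm_num)
  · exact (norm_fderiv_gradient_mixturePotential_sub_le ahat θ θ').trans (by gcongr; norm_num)
  · exact (norm_gradient_mixturePotential_sub_le ahat θ θ').trans
      (by gcongr; linarith [sq_nonneg ‖ahat‖])

/-- part of Proposition `prop:example` of the paper: the Gaussian-mixture
potential satisfies Assumptions ALLlip (with `q = 1`, `L̄1 = 56|â|⁴`, `L̄2 = 8|â|³`,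
`L̄3 = 1 + 4|â|²`) and ADlip (with `ā = 1/2`, `b̄ = |â|²/2`). -/
theorem gaussian_mixture_satisfies_assumptions
    (d : ℕ) (hd : 1 ≤ d)
    (ahat : EuclideanSpace ℝ (Fin d)) (hahat : 1 < ‖ahat‖)
    (U : EuclideanSpace ℝ (Fin d) → ℝ)
    (hUdef : ∀ θ : EuclideanSpace ℝ (Fin d),
      U θ = (1 / 2) * ‖θ - ahat‖ ^ 2 - Real.log (1 + Real.exp (-(2 * ⟪θ, ahat⟫)))) :
    ContDiff ℝ 3 U ∧
    -- Assumption ALLlip with q = 1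
    (∀ (i : Fin d) (θ θ' : EuclideanSpace ℝ (Fin d)),
        ‖hessComp U i θ - hessComp U i θ'‖ ≤ 56 * ‖ahat‖ ^ 4 * ‖θ - θ'‖) ∧
    (∀ θ θ' : EuclideanSpace ℝ (Fin d),
        ‖hess U θ - hess U θ'‖ ≤ 8 * ‖ahat‖ ^ 3 * ‖θ - θ'‖) ∧
    (∀ θ θ' : EuclideanSpace ℝ (Fin d),
        ‖grad U θ - grad U θ'‖ ≤ (1 + 4 * ‖ahat‖ ^ 2) * ‖θ - θ'‖) ∧
    -- Assumption ADlip with ā = 1/2 and b̄ = |â|²/2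
    (∀ θ : EuclideanSpace ℝ (Fin d),
        (1 / 2) * (‖θ‖ ^ 2 - ‖ahat‖ ^ 2) ≤ ⟪θ, grad U θ⟫) :=
  gaussian_mixture_satisfies_assumptions_general d ahat U hUdef
end
end

section
/- Let d, N ≥ 1, let z_1,…,z_N ∈ ℝ^d and y_1,…,y_N ∈ {0,1}, and define the Bayesian logistic-regression potential U : ℝ^d → ℝ by U(θ) := |θ|²/2 + Σ_{i=1}^N (1 − y_i)⟨θ, z_i⟩ + Σ_{i=1}^N log(1 + e^{−⟨θ, z_i⟩}). Then U is three times continuously differentiable and: (i) U satisfies Assumption ALLlip with q = 1, L̄1 = Σ_{i=1}^N |z_i|⁴, L̄2 = Σ_{i=1}^N |z_i|³ and L̄3 = 1 + Σ_{i=1}^N |z_i|²; (ii) U satisfies Assumption ADlip with ā = 1/2 and b̄ = (Σ_{i=1}^N |1 − y_i||z_i|)²/2 + N. -/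
open MeasureTheory ProbabilityTheory Real
open scoped RealInnerProductSpace ENNReal NNReal BigOperators

noncomputable section

/-! With `b = ∑ₖ (1 - yₖ) zₖ` and `φ t = log (1 + e⁻ᵗ)`, the potential is
`‖θ‖² / 2 + ⟪θ, b⟫ + ∑ₖ φ ⟪zₖ, θ⟫`. Differentiating a ridge sum `θ ↦ ∑ₖ f ⟪vₖ, θ⟫ • Aₖ` gives
the ridge sum of `f'` with the rank-one coefficients `⟪vₖ, ·⟫ • Aₖ`, and the derivatives of `φ`
are polynomials in the sigmoid `σ ∈ [0, 1]`: `φ' = σ - 1`, `φ'' = σ (1 - σ)`,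
`φ''' = σ (1 - σ) (1 - 2σ)`, `φ'''' = σ (1 - σ) (1 - 6σ + 6σ²)`, all bounded by `1`. Hence
`φ'`, `φ''`, `φ'''` are `1`-Lipschitz and each Lipschitz constant is `∑ₖ ‖zₖ‖ ‖Aₖ‖`.
For ADlip, `t (σ t - 1) = -t / (1 + eᵗ) ≥ -1` and `‖θ‖ ‖b‖ ≤ (‖θ‖² + ‖b‖²) / 2`. -/

def logisticLoss (t : ℝ) : ℝ := log (1 + exp (-t))

lemma contDiff_logisticLoss {n : WithTop ℕ∞} : ContDiff ℝ n logisticLoss :=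
  (contDiff_const.add (contDiff_exp.comp contDiff_neg)).log fun t => by dsimp; positivity

lemma sigmoid_sub_one (t : ℝ) : sigmoid t - 1 = -(1 + exp t)⁻¹ := by
  rw [← neg_sub, ← sigmoid_neg, sigmoid_def, neg_neg]

lemma hasDerivAt_logisticLoss (t : ℝ) : HasDerivAt logisticLoss (sigmoid t - 1) t := by
  refine (((hasDerivAt_neg' t).exp.const_add 1).log (by positivity)).congr_deriv ?_
  rw [sigmoid_sub_one]
  field_simp
  rw [mul_add, mul_one, ← exp_add, neg_add_cancel, exp_zero, add_comm]

lemma hasDerivAt_sigmoid_sub_one (t : ℝ) :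
    HasDerivAt (fun t => sigmoid t - 1) (sigmoid t * (1 - sigmoid t)) t :=
  (hasDerivAt_sigmoid t).sub_const 1

lemma hasDerivAt_sigmoid_mul_one_sub (t : ℝ) :
    HasDerivAt (fun t => sigmoid t * (1 - sigmoid t))
      (sigmoid t * (1 - sigmoid t) * (1 - 2 * sigmoid t)) t :=
  ((hasDerivAt_sigmoid t).mul ((hasDerivAt_sigmoid t).const_sub 1)).congr_deriv (by ring)

lemma hasDerivAt_sigmoid_mul_one_sub_mul (t : ℝ) :
    HasDerivAt (fun t => sigmoid t * (1 - sigmoid t) * (1 - 2 * sigmoid t))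
      (sigmoid t * (1 - sigmoid t) * (1 - 6 * sigmoid t + 6 * sigmoid t ^ 2)) t :=
  ((hasDerivAt_sigmoid_mul_one_sub t).mul
    (((hasDerivAt_sigmoid t).const_mul 2).const_sub 1)).congr_deriv (by ring)

lemma abs_sigmoid_mul_one_sub_le (t : ℝ) : |sigmoid t * (1 - sigmoid t)| ≤ 1 := by
  have := sigmoid_nonneg t; have := sigmoid_le_one t
  rw [abs_le]; constructor <;> nlinarith

lemma abs_sigmoid_mul_one_sub_mul_le (t : ℝ) :
    |sigmoid t * (1 - sigmoid t) * (1 - 2 * sigmoid t)| ≤ 1 := by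
  have := sigmoid_nonneg t; have := sigmoid_le_one t
  rw [abs_le]; constructor <;>
    nlinarith [mul_nonneg (sigmoid_nonneg t) (sub_nonneg.2 (sigmoid_le_one t))]

lemma abs_sigmoid_mul_one_sub_mul_quadratic_le (t : ℝ) :
    |sigmoid t * (1 - sigmoid t) * (1 - 6 * sigmoid t + 6 * sigmoid t ^ 2)| ≤ 1 := by
  have hw : 0 ≤ sigmoid t * (1 - sigmoid t) :=
    mul_nonneg (sigmoid_nonneg t) (sub_nonneg.2 (sigmoid_le_one t))
  have hw' : sigmoid t * (1 - sigmoid t) ≤ 1 / 4 := by nlinarith [sq_nonneg (2 * sigmoid t - 1)]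
  have : 1 - 6 * sigmoid t + 6 * sigmoid t ^ 2 = 1 - 6 * (sigmoid t * (1 - sigmoid t)) := by ring
  rw [this, abs_le]; constructor <;> nlinarith

lemma neg_one_le_sigmoid_sub_one_mul (t : ℝ) : -1 ≤ (sigmoid t - 1) * t := by
  rw [sigmoid_sub_one, neg_mul, neg_le_neg_iff, inv_mul_le_iff₀ (by positivity)]
  linarith [add_one_le_exp t]

lemma lipschitzWith_one_of_hasDerivAt {f f' : ℝ → ℝ} (hf : ∀ t, HasDerivAt f (f' t) t)
    (hf' : ∀ t, |f' t| ≤ 1) : LipschitzWith 1 f :=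
  lipschitzWith_of_nnnorm_deriv_le (fun t => (hf t).differentiableAt) fun t => by
    rw [(hf t).deriv, ← NNReal.coe_le_coe]; exact hf' t

lemma lipschitzWith_sigmoid_sub_one : LipschitzWith 1 fun t => sigmoid t - 1 :=
  lipschitzWith_one_of_hasDerivAt hasDerivAt_sigmoid_sub_one abs_sigmoid_mul_one_sub_le

lemma lipschitzWith_sigmoid_mul_one_sub : LipschitzWith 1 fun t => sigmoid t * (1 - sigmoid t) :=
  lipschitzWith_one_of_hasDerivAt hasDerivAt_sigmoid_mul_one_sub abs_sigmoid_mul_one_sub_mul_le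

lemma lipschitzWith_sigmoid_mul_one_sub_mul :
    LipschitzWith 1 fun t => sigmoid t * (1 - sigmoid t) * (1 - 2 * sigmoid t) :=
  lipschitzWith_one_of_hasDerivAt hasDerivAt_sigmoid_mul_one_sub_mul
    abs_sigmoid_mul_one_sub_mul_quadratic_le

section RidgeSum

variable {ι E F : Type*} [Fintype ι] [NormedAddCommGroup E] [InnerProductSpace ℝ E]
  [NormedAddCommGroup F] [NormedSpace ℝ F]

def ridgeSum (f : ℝ → ℝ) (v : ι → E) (A : ι → F) (θ : E) : F := ∑ k, f ⟪v k, θ⟫ • A k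

lemma contDiff_ridgeSum {n : WithTop ℕ∞} {f : ℝ → ℝ} (hf : ContDiff ℝ n f) (v : ι → E)
    (A : ι → F) : ContDiff ℝ n (ridgeSum f v A) :=
  ContDiff.sum fun _ _ => (hf.comp (contDiff_const.inner ℝ contDiff_id)).smul contDiff_const

lemma map_ridgeSum {G : Type*} [NormedAddCommGroup G] [NormedSpace ℝ G] (L : F →L[ℝ] G)
    (f : ℝ → ℝ) (v : ι → E) (A : ι → F) (θ : E) :
    L (ridgeSum f v A θ) = ridgeSum f v (fun k => L (A k)) θ := by
  simp only [ridgeSum, map_sum, map_smul]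

lemma hasFDerivAt_ridgeSum {f f' : ℝ → ℝ} (hf : ∀ t, HasDerivAt f (f' t) t) (v : ι → E)
    (A : ι → F) (θ : E) :
    HasFDerivAt (ridgeSum f v A)
      (ridgeSum f' v (fun k => (innerSL ℝ (v k)).smulRight (A k)) θ) θ := by
  have hterm : ∀ k, HasFDerivAt (fun x => f ⟪v k, x⟫ • A k)
      (f' ⟪v k, θ⟫ • (innerSL ℝ (v k)).smulRight (A k)) θ := fun k => by
    refine (((hf _).comp_hasFDerivAt θ (innerSL ℝ (v k)).hasFDerivAt).smul_const
      (A k)).congr_fderiv ?_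
    ext w
    simp [smul_smul]
  exact HasFDerivAt.fun_sum fun k _ => hterm k

lemma hasGradientAt_ridgeSum [CompleteSpace E] {f f' : ℝ → ℝ} (hf : ∀ t, HasDerivAt f (f' t) t)
    (v : ι → E) (a : ι → ℝ) (θ : E) :
    HasGradientAt (ridgeSum f v a) (ridgeSum f' v (fun k => a k • v k) θ) θ := by
  refine (hasFDerivAt_ridgeSum hf v a θ).congr_fderiv ?_
  ext w
  simp [ridgeSum, mul_comm, mul_left_comm]

lemma norm_ridgeSum_sub_le {f : ℝ → ℝ} {K : ℝ≥0} (hf : LipschitzWith K f) (v : ι → E)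
    (A : ι → F) (θ θ' : E) :
    ‖ridgeSum f v A θ - ridgeSum f v A θ'‖ ≤ K * (∑ k, ‖v k‖ * ‖A k‖) * ‖θ - θ'‖ := by
  rw [ridgeSum, ridgeSum, ← Finset.sum_sub_distrib, Finset.mul_sum, Finset.sum_mul]
  refine (norm_sum_le _ _).trans (Finset.sum_le_sum fun k _ => ?_)
  rw [← sub_smul, norm_smul]
  have hinner : ‖⟪v k, θ⟫ - ⟪v k, θ'⟫‖ ≤ ‖v k‖ * ‖θ - θ'‖ := by
    rw [← inner_sub_right]; exact norm_inner_le_norm _ _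
  calc ‖f ⟪v k, θ⟫ - f ⟪v k, θ'⟫‖ * ‖A k‖
      ≤ K * (‖v k‖ * ‖θ - θ'‖) * ‖A k‖ := by
        gcongr
        exact (hf.norm_sub_le _ _).trans (by gcongr)
    _ = K * (‖v k‖ * ‖A k‖) * ‖θ - θ'‖ := by ring

lemma neg_card_le_inner_ridgeSum {f : ℝ → ℝ} (hf : ∀ t, -1 ≤ f t * t) (v : ι → E) (θ : E) :
    -(Fintype.card ι : ℝ) ≤ ⟪θ, ridgeSum f v v θ⟫ := by
  calc -(Fintype.card ι : ℝ) = ∑ _k : ι, (-1 : ℝ) := by simp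
    _ ≤ ∑ k, f ⟪v k, θ⟫ * ⟪v k, θ⟫ := Finset.sum_le_sum fun k _ => hf _
    _ = ⟪θ, ridgeSum f v v θ⟫ := by
      simp only [ridgeSum, inner_sum, real_inner_smul_right, real_inner_comm θ]

lemma norm_innerSL_smulRight (v : E) (w : F) : ‖(innerSL ℝ v).smulRight w‖ = ‖v‖ * ‖w‖ := by
  rw [ContinuousLinearMap.norm_smulRight_apply, innerSL_apply_norm]

end RidgeSum

section LogisticPotential

variable {ι E : Type*} [Fintype ι] [NormedAddCommGroup E] [InnerProductSpace ℝ E]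

def logisticPotential (b : E) (z : ι → E) (θ : E) : ℝ :=
  ‖θ‖ ^ 2 / 2 + ⟪θ, b⟫ + ridgeSum logisticLoss z (fun _ => (1 : ℝ)) θ

lemma logisticPotential_sum_smul (z : ι → E) (c : ι → ℝ) (θ : E) :
    logisticPotential (∑ k, c k • z k) z θ
      = ‖θ‖ ^ 2 / 2 + (∑ k, c k * ⟪θ, z k⟫) + ∑ k, log (1 + exp (-⟪θ, z k⟫)) := by
  simp only [logisticPotential, ridgeSum, logisticLoss, inner_sum, real_inner_smul_right,
    smul_eq_mul, mul_one, real_inner_comm θ]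

lemma contDiff_logisticPotential {n : WithTop ℕ∞} (b : E) (z : ι → E) :
    ContDiff ℝ n (logisticPotential b z) :=
  ((contDiff_norm_sq ℝ).div_const 2 |>.add (contDiff_id.inner ℝ contDiff_const)).add
    (contDiff_ridgeSum contDiff_logisticLoss z _)

lemma hasGradientAt_logisticPotential [CompleteSpace E] (b : E) (z : ι → E) (θ : E) :
    HasGradientAt (logisticPotential b z)
      (θ + b + ridgeSum (fun t => sigmoid t - 1) z z θ) θ := by
  have hquad : HasFDerivAt (fun x : E => ‖x‖ ^ 2 / 2) (innerSL ℝ θ) θ := by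
    simp_rw [div_eq_mul_inv]
    refine ((hasStrictFDerivAt_norm_sq θ).hasFDerivAt.mul_const (2⁻¹ : ℝ)).congr_fderiv ?_
    ext w; simp
  have hlin : HasFDerivAt (fun x : E => ⟪x, b⟫) (innerSL ℝ b) θ :=
    (innerSL ℝ b).hasFDerivAt.congr_of_eventuallyEq
      (Filter.Eventually.of_forall fun x => real_inner_comm b x)
  have hloss := hasGradientAt_ridgeSum hasDerivAt_logisticLoss z (fun _ => (1 : ℝ)) θ
  refine ((hquad.add hlin).add hloss.hasFDerivAt).congr_fderiv ?_
  ext w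
  simp [real_inner_comm]

lemma gradient_logisticPotential [CompleteSpace E] (b : E) (z : ι → E) :
    gradient (logisticPotential b z) = fun θ => θ + b + ridgeSum (fun t => sigmoid t - 1) z z θ :=
  funext fun θ => (hasGradientAt_logisticPotential b z θ).gradient

end LogisticPotential

section Euclidean

variable {ι : Type*} [Fintype ι] {d : ℕ}

local notation "E" => EuclideanSpace ℝ (Fin d)

lemma grad_logisticPotential (b : E) (z : ι → E) (θ : E) :
    grad (logisticPotential b z) θ = θ + b + ridgeSum (fun t => sigmoid t - 1) z z θ := by
  rw [grad, gradient_logisticPotential]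

lemma hess_logisticPotential (b : E) (z : ι → E) (θ : E) :
    hess (logisticPotential b z) θ = ContinuousLinearMap.id ℝ E
      + ridgeSum (fun t => sigmoid t * (1 - sigmoid t)) z
          (fun k => (innerSL ℝ (z k)).smulRight (z k)) θ := by
  rw [hess, gradient_logisticPotential]
  exact (((hasFDerivAt_id θ).add_const b).add
    (hasFDerivAt_ridgeSum hasDerivAt_sigmoid_sub_one z z θ)).fderiv

lemma hasGradientAt_grad_logisticPotential_apply (b : E) (z : ι → E) (i : Fin d) (θ : E) :
    HasGradientAt (fun x => gradient (logisticPotential b z) x i)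
      (EuclideanSpace.single i 1
        + ridgeSum (fun t => sigmoid t * (1 - sigmoid t)) z (fun k => z k i • z k) θ) θ := by
  have hcoord : (fun x => gradient (logisticPotential b z) x i) = fun x =>
      ⟪EuclideanSpace.single i 1, x⟫ + b i
        + ridgeSum (fun t => sigmoid t - 1) z (fun k => z k i) x := by
    funext x
    have h := map_ridgeSum (EuclideanSpace.proj (𝕜 := ℝ) i) (fun t => sigmoid t - 1) z z x
    simp only [PiLp.proj_apply] at h
    simp [gradient_logisticPotential, EuclideanSpace.inner_single_left, h]
  rw [hcoord]
  refine ((((innerSL ℝ (EuclideanSpace.single i 1)).hasFDerivAt (x := θ)).add_const (b i)).add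
    (hasGradientAt_ridgeSum hasDerivAt_sigmoid_sub_one z _ θ).hasFDerivAt).congr_fderiv ?_
  ext w
  simp

lemma hessComp_logisticPotential (b : E) (z : ι → E) (i : Fin d) (θ : E) :
    hessComp (logisticPotential b z) i θ
      = ridgeSum (fun t => sigmoid t * (1 - sigmoid t) * (1 - 2 * sigmoid t)) z
          (fun k => (innerSL ℝ (z k)).smulRight (z k i • z k)) θ := by
  have hgrad : gradComp (logisticPotential b z) i = fun θ => EuclideanSpace.single i 1
      + ridgeSum (fun t => sigmoid t * (1 - sigmoid t)) z (fun k => z k i • z k) θ :=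
    funext fun θ => (hasGradientAt_grad_logisticPotential_apply b z i θ).gradient
  rw [hessComp, hgrad]
  exact ((hasFDerivAt_ridgeSum hasDerivAt_sigmoid_mul_one_sub z _ θ).const_add _).fderiv

lemma norm_grad_logisticPotential_sub_le (b : E) (z : ι → E) (θ θ' : E) :
    ‖grad (logisticPotential b z) θ - grad (logisticPotential b z) θ'‖
      ≤ (1 + ∑ k, ‖z k‖ ^ 2) * ‖θ - θ'‖ := by
  have hR := norm_ridgeSum_sub_le lipschitzWith_sigmoid_sub_one z z θ θ'
  simp only [NNReal.coe_one, one_mul, ← sq] at hR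
  rw [grad_logisticPotential, grad_logisticPotential]
  calc _ = ‖(θ - θ') + (ridgeSum (fun t => sigmoid t - 1) z z θ
          - ridgeSum (fun t => sigmoid t - 1) z z θ')‖ := by congr 1; abel
    _ ≤ _ := norm_add_le _ _
    _ ≤ _ := by linarith

lemma norm_hess_logisticPotential_sub_le (b : E) (z : ι → E) (θ θ' : E) :
    ‖hess (logisticPotential b z) θ - hess (logisticPotential b z) θ'‖
      ≤ (∑ k, ‖z k‖ ^ 3) * ‖θ - θ'‖ := by
  rw [hess_logisticPotential, hess_logisticPotential, add_sub_add_left_eq_sub]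
  convert norm_ridgeSum_sub_le lipschitzWith_sigmoid_mul_one_sub z _ θ θ' using 2
  simp only [NNReal.coe_one, one_mul, norm_innerSL_smulRight]
  exact Finset.sum_congr rfl fun k _ => by ring

lemma norm_hessComp_logisticPotential_sub_le (b : E) (z : ι → E) (i : Fin d) (θ θ' : E) :
    ‖hessComp (logisticPotential b z) i θ - hessComp (logisticPotential b z) i θ'‖
      ≤ (∑ k, ‖z k‖ ^ 4) * ‖θ - θ'‖ := by
  rw [hessComp_logisticPotential, hessComp_logisticPotential]
  refine (norm_ridgeSum_sub_le lipschitzWith_sigmoid_mul_one_sub_mul z _ θ θ').trans ?_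
  simp only [NNReal.coe_one, one_mul, norm_innerSL_smulRight, norm_smul, Real.norm_eq_abs]
  gcongr with k
  calc ‖z k‖ * (‖z k‖ * (|z k i| * ‖z k‖)) ≤ ‖z k‖ * (‖z k‖ * (‖z k‖ * ‖z k‖)) := by
        gcongr; exact PiLp.norm_apply_le (z k) i
    _ = ‖z k‖ ^ 4 := by ring

lemma inner_grad_logisticPotential_ge (b : E) (z : ι → E) (θ : E) :
    ‖θ‖ ^ 2 / 2 - (‖b‖ ^ 2 / 2 + Fintype.card ι) ≤ ⟪θ, grad (logisticPotential b z) θ⟫ := by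
  rw [grad_logisticPotential, inner_add_right, inner_add_right, real_inner_self_eq_norm_sq]
  have hloss := neg_card_le_inner_ridgeSum neg_one_le_sigmoid_sub_one_mul z θ
  have hlin : -(‖θ‖ * ‖b‖) ≤ ⟪θ, b⟫ := neg_le_of_abs_le (abs_real_inner_le_norm θ b)
  nlinarith [sq_nonneg (‖θ‖ - ‖b‖)]

end Euclidean

theorem logistic_regression_satisfies_assumptions_general
    (d N : ℕ)
    (z : Fin N → EuclideanSpace ℝ (Fin d)) (y : Fin N → ℝ)
    (U : EuclideanSpace ℝ (Fin d) → ℝ)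
    (hUdef : ∀ θ : EuclideanSpace ℝ (Fin d),
      U θ = ‖θ‖ ^ 2 / 2 + (∑ i, (1 - y i) * ⟪θ, z i⟫)
        + ∑ i, Real.log (1 + Real.exp (-⟪θ, z i⟫))) :
    ContDiff ℝ 3 U ∧
    -- Assumption ALLlip with q = 1
    (∀ (i : Fin d) (θ θ' : EuclideanSpace ℝ (Fin d)),
        ‖hessComp U i θ - hessComp U i θ'‖ ≤ (∑ i, ‖z i‖ ^ 4) * ‖θ - θ'‖) ∧
    (∀ θ θ' : EuclideanSpace ℝ (Fin d),
        ‖hess U θ - hess U θ'‖ ≤ (∑ i, ‖z i‖ ^ 3) * ‖θ - θ'‖) ∧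
    (∀ θ θ' : EuclideanSpace ℝ (Fin d),
        ‖grad U θ - grad U θ'‖ ≤ (1 + ∑ i, ‖z i‖ ^ 2) * ‖θ - θ'‖) ∧
    -- Assumption ADlip with ā = 1/2 and b̄ = (∑ |1 - y_i||z_i|)²/2 + N
    (∀ θ : EuclideanSpace ℝ (Fin d),
        (1 / 2) * ‖θ‖ ^ 2 - ((∑ i, |1 - y i| * ‖z i‖) ^ 2 / 2 + N)
          ≤ ⟪θ, grad U θ⟫) := by
  set b := ∑ k, (1 - y k) • z k
  obtain rfl : U = logisticPotential b z :=
    funext fun θ => (hUdef θ).trans (logisticPotential_sum_smul z _ θ).symm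
  have hb : ‖b‖ ≤ ∑ k, |1 - y k| * ‖z k‖ :=
    (norm_sum_le _ _).trans_eq (by simp only [norm_smul, Real.norm_eq_abs])
  refine ⟨contDiff_logisticPotential b z, norm_hessComp_logisticPotential_sub_le b z,
    norm_hess_logisticPotential_sub_le b z, norm_grad_logisticPotential_sub_le b z, fun θ => ?_⟩
  have hinner := inner_grad_logisticPotential_ge b z θ
  have hb2 := pow_le_pow_left₀ (norm_nonneg b) hb 2
  rw [Fintype.card_fin] at hinner
  linarith

/-- Proposition `prop:lrexample` of the paper: the Bayesian
logistic-regression potential satisfies Assumptions ALLlip (with `q = 1`,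
`L̄1 = ∑ |z_i|⁴`, `L̄2 = ∑ |z_i|³`, `L̄3 = 1 + ∑ |z_i|²`) and ADlip
(with `ā = 1/2`, `b̄ = (∑ |1 - y_i||z_i|)²/2 + N`). -/
theorem logistic_regression_satisfies_assumptions
    (d N : ℕ) (hd : 1 ≤ d) (hN : 1 ≤ N)
    (z : Fin N → EuclideanSpace ℝ (Fin d)) (y : Fin N → ℝ)
    (hy : ∀ i, y i = 0 ∨ y i = 1)
    (U : EuclideanSpace ℝ (Fin d) → ℝ)
    (hUdef : ∀ θ : EuclideanSpace ℝ (Fin d),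
      U θ = ‖θ‖ ^ 2 / 2 + (∑ i, (1 - y i) * ⟪θ, z i⟫)
        + ∑ i, Real.log (1 + Real.exp (-⟪θ, z i⟫))) :
    ContDiff ℝ 3 U ∧
    -- Assumption ALLlip with q = 1
    (∀ (i : Fin d) (θ θ' : EuclideanSpace ℝ (Fin d)),
        ‖hessComp U i θ - hessComp U i θ'‖ ≤ (∑ i, ‖z i‖ ^ 4) * ‖θ - θ'‖) ∧
    (∀ θ θ' : EuclideanSpace ℝ (Fin d),
        ‖hess U θ - hess U θ'‖ ≤ (∑ i, ‖z i‖ ^ 3) * ‖θ - θ'‖) ∧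
    (∀ θ θ' : EuclideanSpace ℝ (Fin d),
        ‖grad U θ - grad U θ'‖ ≤ (1 + ∑ i, ‖z i‖ ^ 2) * ‖θ - θ'‖) ∧
    -- Assumption ADlip with ā = 1/2 and b̄ = (∑ |1 - y_i||z_i|)²/2 + N
    (∀ θ : EuclideanSpace ℝ (Fin d),
        (1 / 2) * ‖θ‖ ^ 2 - ((∑ i, |1 - y i| * ‖z i‖) ^ 2 / 2 + N)
          ≤ ⟪θ, grad U θ⟫) :=
  logistic_regression_satisfies_assumptions_general d N z y U hUdef
end
end
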